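/- arXiv:1708.07907 — 5 statements merged into one kernel-verified Lean document; each statement's English description precedes it below -/
import Mathlib

section
/- Let a, a_1, ..., a_7 be integers with a_1 ≥ a_2 ≥ ... ≥ a_7 ≥ 0, a_i + a_j ≤ a for all distinct i < j, and a_{i_1} + ... + a_{i_5} ≤ 2a for any five distinct indices. If 3a = a_1 + ... + a_7, then a = 0 and all a_i = 0. -/
/-- The `r = 7` case of the saturation analysis on `dP_7`. -/
theorem stmt_4 (a : ℤ) (b : Fin 7 → ℤ)
    (hmono : ∀ i j : Fin 7, i ≤ j → b j ≤ b i)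
    (hnn : ∀ i, 0 ≤ b i)
    (hpair : ∀ i j : Fin 7, i ≠ j → b i + b j ≤ a)
    (hfive : ∀ s : Finset (Fin 7), s.card = 5 → ∑ i ∈ s, b i ≤ 2 * a)
    (hsum : 3 * a = ∑ i, b i) :
    a = 0 ∧ ∀ i, b i = 0 := by
  have h01 := hpair 0 1 (by decide)
  have h56 := hpair 5 6 (by decide)
  have h5a := hfive {0, 1, 2, 3, 4} (by decide)
  have h5b := hfive {2, 3, 4, 5, 6} (by decide)
  have m1 := hmono 0 1 (by decide)
  have m2 := hmono 1 2 (by decide)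
  have m3 := hmono 2 3 (by decide)
  have m4 := hmono 3 4 (by decide)
  have m5 := hmono 4 5 (by decide)
  have m6 := hmono 5 6 (by decide)
  have n6 := hnn 6
  rw [Fin.sum_univ_seven] at hsum
  simp [Finset.sum_insert, Finset.mem_insert] at h5a h5b
  have key : a = 0 ∧ b 0 = 0 ∧ b 1 = 0 ∧ b 2 = 0 ∧ b 3 = 0 ∧ b 4 = 0 ∧
      b 5 = 0 ∧ b 6 = 0 := by omega
  obtain ⟨ha, h0, h1, h2, h3, h4, h5, h6⟩ := key
  refine ⟨ha, fun i => ?_⟩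
  fin_cases i <;> assumption
end

section
/- Let a, a_1, ..., a_4 be nonnegative integers with a_i + a_j ≤ a for all distinct i, j. If a² = a_1² + a_2² + a_3² + a_4², then (a, a_1, a_2, a_3, a_4) is either zero, or a positive integer multiple of a permutation (in the last four coordinates) of (1,1,0,0,0) or of (2,1,1,1,1). -/
lemma key6 (a x y z w : ℤ) (ha : 0 ≤ a) (hz : 0 ≤ z) (hw : 0 ≤ w) (hy : 0 ≤ y)
    (hyx : y ≤ x) (hzy : z ≤ y) (hwy : w ≤ y)
    (hpair : x + y ≤ a) (hq : a ^ 2 = x ^ 2 + y ^ 2 + z ^ 2 + w ^ 2) :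
    (a = 0 ∧ x = 0 ∧ y = 0 ∧ z = 0 ∧ w = 0) ∨
    (0 < a ∧ x = a ∧ y = 0 ∧ z = 0 ∧ w = 0) ∨
    (0 < x ∧ a = 2 * x ∧ y = x ∧ z = x ∧ w = x) := by
  have hzx : z ≤ x := hzy.trans hyx
  have hwx : w ≤ x := hwy.trans hyx
  have hx : 0 ≤ x := hy.trans hyx
  have h1 : 2 * (x * y) ≤ z ^ 2 + w ^ 2 := by nlinarith [mul_self_le_mul_self (by linarith : (0:ℤ) ≤ x + y) hpair]
  have h2 : z ^ 2 ≤ x * y := by nlinarith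
  have h3 : w ^ 2 ≤ x * y := by nlinarith
  have hz2 : z ^ 2 = x * y := by linarith
  have hw2 : w ^ 2 = x * y := by linarith
  rcases eq_or_lt_of_le hz with h0 | h0
  · -- z = 0
    have hxy0 : x * y = 0 := by nlinarith
    have hw0 : w = 0 := by nlinarith
    have hy0 : y = 0 := by nlinarith
    have hax : (a - x) * (a + x) = 0 := by nlinarith
    rcases mul_eq_zero.1 hax with h | h
    · rcases eq_or_lt_of_le hx with hx0 | hx0
      · left; constructor <;> [skip; constructor] <;> omega
      · right; left; refine ⟨by omega, by omega, hy0, h0.symm, hw0⟩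
    · left
      have : a = 0 := by omega
      refine ⟨this, by omega, hy0, h0.symm, hw0⟩
  · -- 0 < z
    have hA : y ^ 2 ≤ x * y := by nlinarith [mul_le_mul_of_nonneg_right hyx hy]
    have hB : z ^ 2 ≤ y ^ 2 := pow_le_pow_left₀ hz hzy 2
    have hy2z : y ^ 2 = z ^ 2 := le_antisymm (by linarith) hB
    have hyz : y = z := by
      have h4 : (y - z) * (y + z) = 0 := by linear_combination hy2z
      rcases mul_eq_zero.1 h4 with h | h
      · linarith
      · linarith
    have hxz : x = y := by
      have h4 : y * (x - y) = 0 := by linear_combination -hz2 - hy2z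
      rcases mul_eq_zero.1 h4 with h | h
      · linarith
      · linarith
    have hwz : w = z := by
      have h4 : (w - z) * (w + z) = 0 := by linear_combination hw2 - hz2
      rcases mul_eq_zero.1 h4 with h | h
      · linarith
      · linarith
    have ha4 : a ^ 2 = 4 * x ^ 2 := by
      have e1 : y ^ 2 = x ^ 2 := by rw [hxz]
      have e2 : z ^ 2 = x ^ 2 := by rw [← hyz, hxz]
      have e3 : w ^ 2 = x ^ 2 := by rw [hwz, ← hyz, hxz]
      linarith
    have ha2 : a = 2 * x := by
      have h4 : (a - 2 * x) * (a + 2 * x) = 0 := by linear_combination ha4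
      rcases mul_eq_zero.1 h4 with h | h
      · linarith
      · linarith
    right; right
    exact ⟨by omega, ha2, hxz.symm, by omega, by omega⟩

/-- The `r = 4` classification of isotropic nef classes on `dP_4`. -/
theorem stmt_6 (a : ℤ) (b : Fin 4 → ℤ)
    (ha : 0 ≤ a) (hb : ∀ i, 0 ≤ b i)
    (hpair : ∀ i j : Fin 4, i ≠ j → b i + b j ≤ a)
    (hq : a ^ 2 = ∑ i, (b i) ^ 2) :
    (a = 0 ∧ ∀ i, b i = 0) ∨
      ∃ m : ℤ, 0 < m ∧
        ((∃ j : Fin 4, a = m ∧ b j = m ∧ ∀ i, i ≠ j → b i = 0) ∨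
          (a = 2 * m ∧ ∀ i, b i = m)) := by
  classical
  set σ := Tuple.sort b with hσ
  have hmono : Monotone (b ∘ σ) := Tuple.monotone_sort b
  set g : Fin 4 → ℤ := b ∘ σ with hg
  have hb' : ∀ i, b i = g (σ.symm i) := by intro i; simp [hg]
  have hsum : ∑ i, (g i) ^ 2 = ∑ i, (b i) ^ 2 := Equiv.sum_comp σ (fun i => (b i) ^ 2)
  have hq' : a ^ 2 = g 3 ^ 2 + g 2 ^ 2 + g 1 ^ 2 + g 0 ^ 2 := by
    rw [hq, ← hsum, Fin.sum_univ_four]; ring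
  have hne : (σ 3 : Fin 4) ≠ σ 2 := fun h => by
    have := σ.injective h; exact absurd this (by decide)
  have hpair' : g 3 + g 2 ≤ a := hpair _ _ hne
  have h01 : g 0 ≤ g 1 := hmono (by decide : (0:Fin 4) ≤ 1)
  have h12 : g 1 ≤ g 2 := hmono (by decide : (1:Fin 4) ≤ 2)
  have h23 : g 2 ≤ g 3 := hmono (by decide : (2:Fin 4) ≤ 3)
  have hg0 : 0 ≤ g 0 := hb _
  rcases key6 a (g 3) (g 2) (g 1) (g 0) ha (by linarith) hg0 (hb _) h23 h12 (by linarith) hpair' hq' with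
    ⟨ha0, h3, h2, h1, h0⟩ | ⟨hapos, h3, h2, h1, h0⟩ | ⟨hxpos, ha2, h2, h1, h0⟩
  · left
    refine ⟨ha0, fun i => ?_⟩
    rw [hb' i]
    have : ∀ k : Fin 4, g k = 0 := by intro k; fin_cases k <;> assumption
    exact this _
  · right
    refine ⟨a, hapos, Or.inl ⟨σ 3, rfl, h3, fun i hij => ?_⟩⟩
    rw [hb' i]
    have hk : σ.symm i ≠ 3 := by
      intro h; apply hij
      rw [← σ.apply_symm_apply i, h]
    have : ∀ k : Fin 4, k ≠ 3 → g k = 0 := by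
      intro k; fin_cases k <;> intro hk3 <;> first | assumption | exact absurd rfl hk3
    exact this _ hk
  · right
    refine ⟨g 3, hxpos, Or.inr ⟨ha2, fun i => ?_⟩⟩
    rw [hb' i]
    have : ∀ k : Fin 4, g k = g 3 := by
      intro k; fin_cases k
      · exact h0
      · exact h1
      · exact h2
      · rfl
    exact this _
end

section
/- For dP_4, the count N_4 of primitive solutions, i.e. of vectors (a, a_1, ..., a_4) of nonnegative integers, up to positive integer scaling, satisfying a² = Σ_{i=1}^4 a_i², a_i + a_j ≤ a for distinct i,j, and not identically zero, is 5: the four vectors with a = 1 and a single a_i = 1, together with (2,1,1,1,1). -/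
/-- For `dP_4` there are exactly `N_4 = 5` primitive solutions to the Diophantine system:
the four permutations of `(1; 1,0,0,0)` and the vector `(2; 1,1,1,1)`. Every nonzero
solution is a positive integer multiple of one of these. -/

theorem stmt_7 :
    ∃ prim : List (ℤ × (Fin 4 → ℤ)),
      prim = [(1, ![1,0,0,0]), (1, ![0,1,0,0]), (1, ![0,0,1,0]), (1, ![0,0,0,1]),
              (2, ![1,1,1,1])] ∧
      prim.length = 5 ∧ prim.Nodup ∧
      (∀ p ∈ prim, 0 ≤ p.1 ∧ (∀ i, 0 ≤ p.2 i) ∧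
        (∀ i j : Fin 4, i ≠ j → p.2 i + p.2 j ≤ p.1) ∧ p.1 ^ 2 = ∑ i, (p.2 i) ^ 2) ∧
      (∀ (a : ℤ) (b : Fin 4 → ℤ), 0 ≤ a → (∀ i, 0 ≤ b i) →
        (∀ i j : Fin 4, i ≠ j → b i + b j ≤ a) → a ^ 2 = ∑ i, (b i) ^ 2 →
        ¬(a = 0 ∧ ∀ i, b i = 0) →
        ∃ m : ℤ, 0 < m ∧ ∃ p ∈ prim, a = m * p.1 ∧ ∀ i, b i = m * p.2 i) := by
  refine ⟨_, rfl, rfl, by decide, by decide, ?_⟩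
  intro a b ha hb hpair hsq hnz
  -- pick index of maximum
  obtain ⟨i0, -, hM⟩ := Finset.exists_max_image (Finset.univ : Finset (Fin 4)) b
    ⟨0, Finset.mem_univ 0⟩
  have hne : (Finset.univ.erase i0).Nonempty := by
    rw [← Finset.card_pos]
    simp [Finset.card_erase_of_mem]
  obtain ⟨j0, hj0mem, hN⟩ := Finset.exists_max_image (Finset.univ.erase i0) b hne
  have hj0 : j0 ≠ i0 := (Finset.mem_erase.mp hj0mem).1
  set M := b i0 with hMdef
  set N := b j0 with hNdef
  have hM0 : 0 ≤ M := hb i0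
  have hN0 : 0 ≤ N := hb j0
  have hNM : N ≤ M := hM j0 (Finset.mem_univ j0)
  have hsplit : ∑ x ∈ Finset.univ.erase i0, b x ^ 2 + b i0 ^ 2 = ∑ x, b x ^ 2 :=
    Finset.sum_erase_add _ _ (Finset.mem_univ i0)
  have hNsum : ∑ x ∈ Finset.univ.erase i0, b x ^ 2 ≤ 3 * N ^ 2 := by
    have h1 : ∑ x ∈ Finset.univ.erase i0, b x ^ 2 ≤ ∑ _x ∈ Finset.univ.erase i0, N ^ 2 :=
      Finset.sum_le_sum (fun x hx => by
        have h1 := hN x hx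
        have h2 := hb x
        nlinarith)
    have h2 : ∑ _x ∈ Finset.univ.erase i0, N ^ 2 = 3 * N ^ 2 := by
      rw [Finset.sum_const]
      simp [Finset.card_erase_of_mem]
    linarith
  have hMNa : N + M ≤ a := hpair j0 i0 hj0
  have key : N * (M - N) ≤ 0 := by nlinarith [hsplit, hNsum]
  by_cases hNz : N = 0
  · -- all other coordinates are zero, a = M
    have hz : ∀ j, j ≠ i0 → b j = 0 := fun j hj =>
      le_antisymm (hNz ▸ hN j (Finset.mem_erase.mpr ⟨hj, Finset.mem_univ j⟩)) (hb j)
    have hsum0 : ∑ x ∈ Finset.univ.erase i0, b x ^ 2 = 0 :=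
      Finset.sum_eq_zero (fun x hx => by
        rw [hz x (Finset.mem_erase.mp hx).1]; ring)
    have haM : a ^ 2 = M ^ 2 := by rw [hsq, ← hsplit, hsum0]; ring
    have haM' : a = M := le_antisymm (by nlinarith) (by nlinarith)
    have ha0 : 0 < a := by
      rcases lt_or_eq_of_le ha with h | h
      · exact h
      · exfalso; exact hnz ⟨h.symm, fun i => by
          by_cases hi : i = i0
          · subst hi; rw [← hMdef, ← haM', ← h]
          · exact hz i hi⟩
    refine ⟨a, ha0, (1, fun j => if j = i0 then 1 else 0), ?_, by ring, fun i => ?_⟩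
    · have : (fun j => if j = i0 then (1:ℤ) else 0) =
        ![if (0:Fin 4) = i0 then 1 else 0, if (1:Fin 4) = i0 then 1 else 0,
          if (2:Fin 4) = i0 then 1 else 0, if (3:Fin 4) = i0 then 1 else 0] := by
        funext j; fin_cases j <;> rfl
      rw [this]
      fin_cases i0 <;> simp
    · by_cases hi : i = i0
      · subst hi; simp [← hMdef, ← haM']
      · simp [hi, hz i hi]
  · -- N = M, all coordinates equal M, a = 2M
    have hN0' : 0 < N := lt_of_le_of_ne hN0 (Ne.symm hNz)
    have hMN : M = N := le_antisymm (by nlinarith) hNM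
    have ha2M : a = 2 * M := by
      have h1 : a ^ 2 ≤ 4 * M ^ 2 := by nlinarith
      have h2 : (2 * M) ^ 2 ≤ a ^ 2 := by nlinarith
      have := le_antisymm (by nlinarith : a ≤ 2 * M) (by nlinarith : 2 * M ≤ a)
      exact this
    have hsumM : ∑ x ∈ Finset.univ.erase i0, (M ^ 2 - b x ^ 2) = 0 := by
      rw [Finset.sum_sub_distrib, Finset.sum_const, Finset.card_erase_of_mem (Finset.mem_univ i0)]
      have : a ^ 2 = ∑ x ∈ Finset.univ.erase i0, b x ^ 2 + M ^ 2 := by rw [hsq, hsplit]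
      simp only [Finset.card_univ, Fintype.card_fin]
      have h3 : ∑ x ∈ Finset.univ.erase i0, b x ^ 2 = 3 * M ^ 2 := by nlinarith
      rw [h3]; simp
    have hall : ∀ j, b j = M := by
      intro j
      by_cases hj : j = i0
      · subst hj; rfl
      · have hmem : j ∈ Finset.univ.erase i0 := Finset.mem_erase.mpr ⟨hj, Finset.mem_univ j⟩
        have := (Finset.sum_eq_zero_iff_of_nonneg (fun x hx => by
          have h1 := hN x hx
          have h2 := hb x
          nlinarith [hMN])).mp hsumM j hmem
        have h1 := hN j hmem
        have h2 := hb j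
        nlinarith [hMN]
    have hM0' : 0 < M := hMN ▸ hN0'
    refine ⟨M, hM0', (2, ![1,1,1,1]), by simp, by rw [ha2M]; ring, fun i => ?_⟩
    fin_cases i <;> simp [hall]
end

section
/- Let a, a_1, ..., a_5 be nonnegative integers with a_i + a_j ≤ a for all distinct i, j, and a_1 + ... + a_5 ≤ 2a. If a² = a_1² + ... + a_5² and the vector is nonzero, then (a, a_1, ..., a_5) is a positive integer multiple of a permutation (in the last five coordinates) of (1,1,0,0,0,0) or of (2,1,1,1,1,0). In particular there are exactly N_5 = 10 primitive solutions. -/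
lemma helper5 (M : ℤ) (hM : 0 < M) (b : Fin 5 → ℤ) (h : ∀ i, b i = 0 ∨ b i = M)
    (hs : b 0 + b 1 + b 2 + b 3 + b 4 = 4 * M) :
    ∃ j : Fin 5, b j = 0 ∧ ∀ i, i ≠ j → b i = M := by
  rcases h 0 with h0|h0 <;> rcases h 1 with h1|h1 <;> rcases h 2 with h2|h2 <;>
    rcases h 3 with h3|h3 <;> rcases h 4 with h4|h4 <;>
  first
  | omega
  | exact ⟨0, h0, by intro i hi; fin_cases i <;> simp_all⟩
  | exact ⟨1, h1, by intro i hi; fin_cases i <;> simp_all⟩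
  | exact ⟨2, h2, by intro i hi; fin_cases i <;> simp_all⟩
  | exact ⟨3, h3, by intro i hi; fin_cases i <;> simp_all⟩
  | exact ⟨4, h4, by intro i hi; fin_cases i <;> simp_all⟩

lemma main5 (a : ℤ) (b : Fin 5 → ℤ) (ha : 0 ≤ a) (hb : ∀ i, 0 ≤ b i)
    (hpair : ∀ i j : Fin 5, i ≠ j → b i + b j ≤ a) (hsum : (∑ i, b i) ≤ 2 * a)
    (hsq : a ^ 2 = ∑ i, (b i) ^ 2) (hne : ¬(a = 0 ∧ ∀ i, b i = 0)) :
    ∃ m : ℤ, 0 < m ∧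
      ((∃ j : Fin 5, a = m ∧ b j = m ∧ ∀ i, i ≠ j → b i = 0) ∨
        (∃ j : Fin 5, a = 2 * m ∧ b j = 0 ∧ ∀ i, i ≠ j → b i = m)) := by
  -- a > 0
  have hapos : 0 < a := by
    rcases eq_or_lt_of_le ha with h | h
    · exfalso; apply hne
      have hz : ∀ i, b i = 0 := by
        intro i
        have h2 : (∑ i, (b i) ^ 2) = 0 := by rw [← hsq, ← h]; ring
        have := (Finset.sum_eq_zero_iff_of_nonneg (by intro i _; positivity)).mp h2 i
          (Finset.mem_univ i)
        nlinarith [this, hb i]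
      exact ⟨h.symm, hz⟩
    · exact h
  obtain ⟨j, -, hj⟩ := Finset.exists_max_image Finset.univ b ⟨0, Finset.mem_univ 0⟩
  simp only [Finset.mem_univ, forall_true_left] at hj
  set M := b j with hMdef
  -- M ≤ a
  have hMa : M ≤ a := by
    obtain ⟨k, hk⟩ : ∃ k : Fin 5, k ≠ j := by
      rcases eq_or_ne j 0 with rfl | h
      · exact ⟨1, by decide⟩
      · exact ⟨0, Ne.symm h⟩
    have := hpair j k (Ne.symm hk)
    have := hb k
    omega
  -- sum of squares ≤ M * sum
  have key1 : (∑ i, (b i) ^ 2) ≤ ∑ i, M * b i := by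
    apply Finset.sum_le_sum
    intro i _
    nlinarith [hb i, hj i]
  rw [← Finset.mul_sum] at key1
  set S := ∑ i, b i with hSdef
  have hSnn : 0 ≤ S := Finset.sum_nonneg fun i _ => hb i
  -- a ≤ 2M
  have ha2M : a ≤ 2 * M := by nlinarith
  have hMpos : 0 < M := by linarith
  rcases eq_or_lt_of_le hMa with hMeq | hMlt
  · -- a = M : type 1
    refine ⟨a, hapos, Or.inl ⟨j, rfl, hMeq, ?_⟩⟩
    intro i hi
    have := hpair i j hi
    have := hb i
    omega
  · -- M < a : show a = 2M
    have herase : ∀ i ∈ Finset.univ.erase j, (b i) ^ 2 ≤ (a - M) * b i := by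
      intro i hi
      have hij : i ≠ j := (Finset.mem_erase.mp hi).1
      have h1 := hpair i j hij
      nlinarith [hb i]
    have key2 : (∑ i ∈ Finset.univ.erase j, (b i) ^ 2) ≤
        ∑ i ∈ Finset.univ.erase j, (a - M) * b i := Finset.sum_le_sum herase
    rw [← Finset.mul_sum] at key2
    have hsplit : (∑ i, (b i) ^ 2) = (b j) ^ 2 + ∑ i ∈ Finset.univ.erase j, (b i) ^ 2 :=
      (Finset.add_sum_erase _ _ (Finset.mem_univ j)).symm
    have hsplitS : S = b j + ∑ i ∈ Finset.univ.erase j, b i :=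
      (Finset.add_sum_erase _ _ (Finset.mem_univ j)).symm
    have h2Ma : 2 * M ≤ a := by nlinarith
    have haM : a = 2 * M := le_antisymm ha2M h2Ma
    -- equality analysis: S = 4M and each b i ∈ {0, M}
    have hS4 : S = 4 * M := by nlinarith
    have hzero : (∑ i, (M * b i - (b i) ^ 2)) = 0 := by
      rw [Finset.sum_sub_distrib, ← Finset.mul_sum, ← hSdef, ← hsq, hS4, haM]; ring
    have hmem : ∀ i : Fin 5, b i = 0 ∨ b i = M := by
      intro i
      have := (Finset.sum_eq_zero_iff_of_nonneg (fun i _ => by nlinarith [hb i, hj i])).mp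
        hzero i (Finset.mem_univ i)
      have h0 : b i * (M - b i) = 0 := by nlinarith [this]
      rcases mul_eq_zero.mp h0 with h | h
      · exact Or.inl h
      · exact Or.inr (by linarith)
    have hsum5 : b 0 + b 1 + b 2 + b 3 + b 4 = 4 * M := by
      have := hS4
      rw [hSdef] at this
      simpa [Fin.sum_univ_five] using this
    obtain ⟨j0, hj0, hrest⟩ := helper5 M hMpos b hmem hsum5
    exact ⟨M, hMpos, Or.inr ⟨j0, haM, hj0, hrest⟩⟩

/-- The `r = 5` classification on `dP_5`: every nonzero solution is a positive multiple of a
permutation of `(1;1,0,0,0,0)` or of `(2;1,1,1,1,0)`; each such pattern is a solution,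
giving exactly `N_5 = 10` primitive solutions. -/
theorem stmt_8 :
    (∀ (a : ℤ) (b : Fin 5 → ℤ), 0 ≤ a → (∀ i, 0 ≤ b i) →
      (∀ i j : Fin 5, i ≠ j → b i + b j ≤ a) → (∑ i, b i) ≤ 2 * a →
      a ^ 2 = ∑ i, (b i) ^ 2 → ¬(a = 0 ∧ ∀ i, b i = 0) →
      ∃ m : ℤ, 0 < m ∧
        ((∃ j : Fin 5, a = m ∧ b j = m ∧ ∀ i, i ≠ j → b i = 0) ∨
          (∃ j : Fin 5, a = 2 * m ∧ b j = 0 ∧ ∀ i, i ≠ j → b i = m))) ∧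
    (∀ j : Fin 5,
      ((1 : ℤ) ^ 2 = ∑ i, ((fun i => if i = j then (1:ℤ) else 0) i) ^ 2 ∧
        (∀ i k : Fin 5, i ≠ k →
          (if i = j then (1:ℤ) else 0) + (if k = j then (1:ℤ) else 0) ≤ 1) ∧
        (∑ i, (fun i => if i = j then (1:ℤ) else 0) i) ≤ 2 * 1) ∧
      ((2 : ℤ) ^ 2 = ∑ i, ((fun i => if i = j then (0:ℤ) else 1) i) ^ 2 ∧
        (∀ i k : Fin 5, i ≠ k →
          (if i = j then (0:ℤ) else 1) + (if k = j then (0:ℤ) else 1) ≤ 2) ∧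
        (∑ i, (fun i => if i = j then (0:ℤ) else 1) i) ≤ 2 * 2)) := by
  constructor
  · exact main5
  · intro j
    refine ⟨⟨?_, ?_, ?_⟩, ?_, ?_, ?_⟩
    · fin_cases j <;> simp [Fin.sum_univ_five]
    · intro i k hik
      split_ifs with h1 h2 h2 <;> first | exact absurd (h1.trans h2.symm) hik | norm_num
    · fin_cases j <;> simp [Fin.sum_univ_five]
    · fin_cases j <;> simp [Fin.sum_univ_five]
    · intro i k hik; split_ifs <;> norm_num
    · fin_cases j <;> simp [Fin.sum_univ_five]
end

section
/- For each integer k, define D = (2(2+k+k²))·f + 3E_1 - E_2 + E_3 + E_4 + 2k·E_8 - 2(1+k)·E_9 in the lattice ℤ^{10} with f = 3L - E_1 - ... - E_9 and the intersection form L² = 1, E_i·E_j = -δ_{ij}, L·E_i = 0. Then D·D = 0 and D·f = 2. -/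
lemma sum_univ_nine' {β : Type*} [AddCommMonoid β] (g : Fin 9 → β) :
    ∑ i : Fin 9, g i = g 0 + g 1 + g 2 + g 3 + g 4 + g 5 + g 6 + g 7 + g 8 := by
  rw [Fin.sum_univ_castSucc, Fin.sum_univ_eight]
  rfl

/-- The explicit one-parameter family of divisor classes on `dP_9`
`D = 2(2+k+k²)f + 3E₁ - E₂ + E₃ + E₄ + 2kE₈ - 2(1+k)E₉` satisfies `D·D = 0`, `D·f = 2`.
Vectors record the coefficients in the basis `(L, E₁, …, E₉)` with intersection form
`diag(1, -1, …, -1)`; here `f = 3L - E₁ - ⋯ - E₉`. -/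
theorem stmt_13 (k : ℤ) :
    let c : ℤ := 2 * (2 + k + k ^ 2)
    let D : Fin 10 → ℤ :=
      ![3 * c, 3 - c, -1 - c, 1 - c, 1 - c, -c, -c, -c, 2 * k - c, -2 * (1 + k) - c]
    let f : Fin 10 → ℤ := ![3, -1, -1, -1, -1, -1, -1, -1, -1, -1]
    let dot : (Fin 10 → ℤ) → (Fin 10 → ℤ) → ℤ :=
      fun u v => u 0 * v 0 - ∑ i : Fin 9, u i.succ * v i.succ
    dot D D = 0 ∧ dot D f = 2 := by
  intro c D f dot
  have hc : c = 2 * (2 + k + k ^ 2) := rfl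
  have h0 : D 0 = 3 * c := rfl
  have h1 : D (Fin.succ 0) = 3 - c := rfl
  have h2 : D (Fin.succ 1) = -1 - c := rfl
  have h3 : D (Fin.succ 2) = 1 - c := rfl
  have h4 : D (Fin.succ 3) = 1 - c := rfl
  have h5 : D (Fin.succ 4) = -c := rfl
  have h6 : D (Fin.succ 5) = -c := rfl
  have h7 : D (Fin.succ 6) = -c := rfl
  have h8 : D (Fin.succ 7) = 2 * k - c := rfl
  have h9 : D (Fin.succ 8) = -2 * (1 + k) - c := rfl
  have g0 : f 0 = 3 := rfl
  have g1 : f (Fin.succ 0) = -1 := rfl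
  have g2 : f (Fin.succ 1) = -1 := rfl
  have g3 : f (Fin.succ 2) = -1 := rfl
  have g4 : f (Fin.succ 3) = -1 := rfl
  have g5 : f (Fin.succ 4) = -1 := rfl
  have g6 : f (Fin.succ 5) = -1 := rfl
  have g7 : f (Fin.succ 6) = -1 := rfl
  have g8 : f (Fin.succ 7) = -1 := rfl
  have g9 : f (Fin.succ 8) = -1 := rfl
  refine ⟨?_, ?_⟩ <;>
  · show _ * _ - _ = _
    rw [sum_univ_nine']
    show (_ : ℤ) = _
    rw [h0, h1, h2, h3, h4, h5, h6, h7, h8, h9, hc]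
    try rw [g0, g1, g2, g3, g4, g5, g6, g7, g8, g9]
    ring
end
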